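/- Nonnegativity of flow on closed arcs forces validity of strengthened duals: let C^tr be the set of arcs whose capacity is zero under the current master solution and O^tr the arcs with positive capacity. If (λ*, μ*) is dual feasible and λ'_a ≤ 0 for a ∈ C^tr satisfy ∑_{a∈C^tr} d_p^a λ'_a ≤ c_p^r − ∑_{a∈O^tr} d_p^a λ*_a − μ*_r for all r, p, then the combined vector (λ*_{|O^tr}, λ'_{|C^tr}, μ*) is dual feasible, and the optimality cut it generates has the same value as the original cut at the current master solution (since closed arcs contribute zero), i.e., the strengthened Open-Close cut is valid and tight at the current point. -/
import Mathlib


/-- Validity and tightness of the Open-Close strengthened Benders cut: the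
combined dual vector (λ* on open arcs, λ' on closed arcs, μ*) is dual feasible,
and since closed arcs have zero capacity the strengthened cut has the same
value as the original cut at the current master solution. -/
theorem stmt_8 {A R : Type} [Fintype A] [Fintype R] [DecidableEq A]
    (P : R → Type) [∀ r, Fintype (P r)]
    (Otr Ctr : Finset A) (hdisj : Disjoint Otr Ctr) (hunion : Otr ∪ Ctr = Finset.univ)
    (d : (r : R) → P r → A → ℝ) (c : (r : R) → P r → ℝ) (f : R → ℝ) (g : R → ℝ)
    (lamstar : A → ℝ) (μstar : R → ℝ)
    (hlamstar : ∀ a, lamstar a ≤ 0) (hμstar : ∀ r, μstar r ≤ f r)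
    (hfeas : ∀ r (p : P r), (∑ a, d r p a * lamstar a) + μstar r ≤ c r p)
    (lam' : A → ℝ) (hlam' : ∀ a ∈ Ctr, lam' a ≤ 0)
    (hstr : ∀ r (p : P r),
      (∑ a ∈ Ctr, d r p a * lam' a) ≤
        c r p - (∑ a ∈ Otr, d r p a * lamstar a) - μstar r)
    (cap : A → ℝ) (hcapO : ∀ a ∈ Otr, 0 < cap a) (hcapC : ∀ a ∈ Ctr, cap a = 0) :
    (∀ a, (if a ∈ Otr then lamstar a else lam' a) ≤ 0) ∧
    (∀ r, μstar r ≤ f r) ∧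
    (∀ r (p : P r),
      (∑ a, d r p a * (if a ∈ Otr then lamstar a else lam' a)) + μstar r ≤ c r p) ∧
    ((∑ a, cap a * (if a ∈ Otr then lamstar a else lam' a)) + (∑ r, g r * μstar r)
      = (∑ a, cap a * lamstar a) + (∑ r, g r * μstar r)) := by
  have hmemC : ∀ a : A, a ∉ Otr → a ∈ Ctr := by
    intro a ha
    have : a ∈ Otr ∪ Ctr := hunion ▸ Finset.mem_univ a
    rcases Finset.mem_union.mp this with h | h
    · exact absurd h ha
    · exact h
  have hsplit : ∀ (h : A → ℝ), (∑ a, h a) = (∑ a ∈ Otr, h a) + (∑ a ∈ Ctr, h a) := by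
    intro h
    rw [← Finset.sum_union hdisj, hunion]
  refine ⟨?_, hμstar, ?_, ?_⟩
  · intro a
    by_cases ha : a ∈ Otr
    · simp [ha, hlamstar a]
    · simp [ha, hlam' a (hmemC a ha)]
  · intro r p
    rw [hsplit]
    have h1 : (∑ a ∈ Otr, d r p a * (if a ∈ Otr then lamstar a else lam' a))
        = ∑ a ∈ Otr, d r p a * lamstar a :=
      Finset.sum_congr rfl (fun a ha => by simp [ha])
    have h2 : (∑ a ∈ Ctr, d r p a * (if a ∈ Otr then lamstar a else lam' a))
        = ∑ a ∈ Ctr, d r p a * lam' a :=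
      Finset.sum_congr rfl (fun a ha => by
        have : a ∉ Otr := fun h => (Finset.disjoint_left.mp hdisj h) ha
        simp [this])
    rw [h1, h2]
    linarith [hstr r p]
  · congr 1
    rw [hsplit, hsplit (fun a => cap a * lamstar a)]
    have h1 : (∑ a ∈ Otr, cap a * (if a ∈ Otr then lamstar a else lam' a))
        = ∑ a ∈ Otr, cap a * lamstar a :=
      Finset.sum_congr rfl (fun a ha => by simp [ha])
    have h2 : ∀ (h : A → ℝ), (∑ a ∈ Ctr, cap a * h a) = 0 :=
      fun h => Finset.sum_eq_zero (fun a ha => by rw [hcapC a ha, zero_mul])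
    rw [h1, h2, h2]
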